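/- arXiv:1407.1300 — 5 statements merged into one kernel-verified Lean document; each statement's English description precedes it below -/
import Mathlib

section
/- Let φ: ℝ² → ℝ ∪ {+∞} be a Pogorelov potential: φ(y) = max_k {y·d_k − v_k} on the closed unit ball B(0,1), extended by +∞ outside, for distinct points d_1,…,d_K ∈ ℝ². Suppose the cell C_k = {y ∈ B(0,1) : ∇φ(y) = d_k} has positive Lebesgue measure. Then the Legendre–Fenchel dual satisfies φ*(d_k) = v_k. -/
open RealInnerProductSpace

/-- if φ(y) = max_k {y·d_k − v_k} on the closed unit ball (extended by +∞
outside) and the cell C_{k₀} = {y ∈ B(0,1) : ∇φ(y) = d_{k₀}} has positive Lebesgue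
measure, then φ*(d_{k₀}) = v_{k₀}. -/
theorem stmt4 (K : ℕ) [NeZero K] (d : Fin K → EuclideanSpace ℝ (Fin 2))
    (hd : Function.Injective d) (v : Fin K → ℝ)
    (φ : EuclideanSpace ℝ (Fin 2) → ℝ)
    (hφ : ∀ y, φ y = ⨆ k, (⟪y, d k⟫ - v k))
    (phiStar : EuclideanSpace ℝ (Fin 2) → ℝ)
    (hStar : ∀ x, phiStar x = sSup ((fun y => ⟪x, y⟫ - φ y) '' Metric.closedBall 0 1))
    (k₀ : Fin K)
    (C : Set (EuclideanSpace ℝ (Fin 2)))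
    (hC : C = {y | y ∈ Metric.closedBall (0 : EuclideanSpace ℝ (Fin 2)) 1 ∧
      HasGradientAt φ (d k₀) y})
    (hpos : 0 < MeasureTheory.volume C) :
    phiStar (d k₀) = v k₀ := by
  have hne : Nonempty (Fin K) := ⟨⟨0, Nat.pos_of_ne_zero (NeZero.ne K)⟩⟩
  obtain ⟨y₀, hy₀⟩ := MeasureTheory.nonempty_of_measure_ne_zero hpos.ne'
  rw [hC] at hy₀
  obtain ⟨hy₀ball, hgrad⟩ := hy₀
  have hle : ∀ y k, ⟪y, d k⟫ - v k ≤ φ y := by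
    intro y k
    rw [hφ]
    exact le_ciSup (f := fun k => (⟪y, d k⟫ - v k : ℝ)) (Set.Finite.bddAbove (Set.finite_range _)) k
  -- the sup at y₀ is attained at some k₁
  obtain ⟨k₁, hk₁⟩ : ∃ k, φ y₀ = ⟪y₀, d k⟫ - v k := by
    rw [hφ]
    obtain ⟨k, hk⟩ := exists_eq_ciSup_of_finite (f := fun k => ⟪y₀, d k⟫ - v k)
    exact ⟨k, hk.symm⟩
  -- the affine piece k₁ has gradient d k₁ and touches φ from below at y₀
  have hf1 : HasFDerivAt (fun y : EuclideanSpace ℝ (Fin 2) => ⟪y, d k₁⟫ - v k₁)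
      (InnerProductSpace.toDual ℝ _ (d k₁) : EuclideanSpace ℝ (Fin 2) →L[ℝ] ℝ) y₀ := by
    have : (fun y : EuclideanSpace ℝ (Fin 2) => ⟪y, d k₁⟫ - v k₁)
        = fun y => (InnerProductSpace.toDual ℝ _ (d k₁)) y - v k₁ := by
      funext y
      rw [InnerProductSpace.toDual_apply_apply, real_inner_comm]
    rw [this]
    exact ((InnerProductSpace.toDual ℝ _ (d k₁)).hasFDerivAt).sub_const _
  have hmin : IsLocalMin (fun y => φ y - (⟪y, d k₁⟫ - v k₁)) y₀ := by
    apply Filter.Eventually.of_forall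
    intro y
    simp only [hk₁, sub_self]
    linarith [hle y k₁]
  have hF : HasFDerivAt (fun y => φ y - (⟪y, d k₁⟫ - v k₁))
      ((InnerProductSpace.toDual ℝ _ (d k₀) : EuclideanSpace ℝ (Fin 2) →L[ℝ] ℝ)
        - InnerProductSpace.toDual ℝ _ (d k₁)) y₀ :=
    hgrad.hasFDerivAt.sub hf1
  have hzero := hmin.hasFDerivAt_eq_zero hF
  have hdd : d k₀ = d k₁ := by
    have : InnerProductSpace.toDual ℝ (EuclideanSpace ℝ (Fin 2)) (d k₀)
        = InnerProductSpace.toDual ℝ _ (d k₁) := by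
      rwa [sub_eq_zero] at hzero
    exact (InnerProductSpace.toDual ℝ (EuclideanSpace ℝ (Fin 2))).injective this
  have hk01 : k₁ = k₀ := hd hdd.symm
  rw [hk01] at hk₁
  -- now compute the sup
  rw [hStar]
  have hub : ∀ z ∈ (fun y => ⟪d k₀, y⟫ - φ y) '' Metric.closedBall 0 1, z ≤ v k₀ := by
    rintro z ⟨y, -, rfl⟩
    have h1 := hle y k₀
    have h2 : (⟪d k₀, y⟫ : ℝ) = ⟪y, d k₀⟫ := real_inner_comm _ _
    show (⟪d k₀, y⟫ : ℝ) - φ y ≤ v k₀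
    linarith
  apply le_antisymm
  · exact csSup_le ⟨_, Set.mem_image_of_mem _ (Metric.mem_closedBall_self zero_le_one)⟩ hub
  · apply le_csSup ⟨v k₀, hub⟩
    refine ⟨y₀, hy₀ball, ?_⟩
    show (⟪d k₀, y₀⟫ : ℝ) - φ y₀ = v k₀
    have h2 : (⟪d k₀, y₀⟫ : ℝ) = ⟪y₀, d k₀⟫ := real_inner_comm _ _
    rw [hk₁, h2]
    ring
end

section
/- Let u: ℝ² → ℝ be a convex function such that (i) for each k, the subgradient measure |∂u(d_k)| = α_k with α_k > 0 and Σ_k α_k = π, and (ii) ∂u(ℝ²) ⊆ closed unit ball B(0,1). Then the subgradient of u has Lebesgue measure zero away from the points d_k: |∂u(ℝ² \ ∪_k {d_k})| = 0. -/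
/-!
Subgradients at distinct points have disjoint interiors: if `p` lies in the interior of `∂u(x)`
and also in `∂u(y)`, monotonicity of the subgradient makes `p` a local minimum of the linear
form `⟪x - y, ·⟫` on an open set, so `x = y`. Boundaries of convex sets are Lebesgue-null, so
the pairwise disjoint interiors of the `∂u(d_k)` have total measure at least
`Σ α_k = π = |B(0,1)|` and fill the unit ball up to a null set; the rest of `∂u(ℝ²)` lies in
that null set.
-/

open RealInnerProductSpace MeasureTheory

/-- The subgradient of `u` at a point `x`. -/
def SG (u : EuclideanSpace ℝ (Fin 2) → ℝ) (x : EuclideanSpace ℝ (Fin 2)) :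
    Set (EuclideanSpace ℝ (Fin 2)) :=
  {p | ∀ z, u x + ⟪p, z - x⟫ ≤ u z}

/-- The subgradient image of a set `E`. -/
def SGs (u : EuclideanSpace ℝ (Fin 2) → ℝ) (E : Set (EuclideanSpace ℝ (Fin 2))) :
    Set (EuclideanSpace ℝ (Fin 2)) :=
  ⋃ x ∈ E, SG u x

open Set Function

theorem eq_zero_of_mem_interior_of_forall_inner_nonneg {E : Type*} [NormedAddCommGroup E]
    [InnerProductSpace ℝ E] {s : Set E} {p v : E} (hp : p ∈ interior s)
    (h : ∀ q ∈ s, 0 ≤ ⟪v, q - p⟫) : v = 0 := by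
  have hmin : IsLocalMin (innerSL ℝ v) p :=
    Filter.mem_of_superset (mem_interior_iff_mem_nhds.1 hp) fun q hq => by
      simpa [inner_sub_right] using h q hq
  simpa using congr($(hmin.hasFDerivAt_eq_zero (innerSL ℝ v).hasFDerivAt) v)

section Subgradient

variable {u : EuclideanSpace ℝ (Fin 2) → ℝ} {x y p q : EuclideanSpace ℝ (Fin 2)}

theorem inner_sub_nonneg_of_mem_SG (hq : q ∈ SG u x) (hp : p ∈ SG u y) :
    0 ≤ ⟪x - y, q - p⟫ := by
  have hx := hq y
  have hy := hp x
  simp only [inner_sub_left, inner_sub_right, real_inner_comm x, real_inner_comm y] at *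
  linarith

theorem notMem_SG_of_mem_interior_SG (hxy : x ≠ y) (hp : p ∈ interior (SG u x)) :
    p ∉ SG u y := fun hpy =>
  hxy <| sub_eq_zero.1 <| eq_zero_of_mem_interior_of_forall_inner_nonneg hp fun _ hq =>
    inner_sub_nonneg_of_mem_SG hq hpy

theorem convex_SG (u : EuclideanSpace ℝ (Fin 2) → ℝ) (x : EuclideanSpace ℝ (Fin 2)) :
    Convex ℝ (SG u x) := by
  intro p hp q hq a b ha hb hab z
  have hcomb := add_le_add (mul_le_mul_of_nonneg_left (hp z) ha)
    (mul_le_mul_of_nonneg_left (hq z) hb)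
  simp only [inner_add_left, real_inner_smul_left]
  linear_combination hcomb + (u z - u x) * hab

theorem volume_interior_SG (u : EuclideanSpace ℝ (Fin 2) → ℝ)
    (x : EuclideanSpace ℝ (Fin 2)) :
    volume (interior (SG u x)) = volume (SG u x) :=
  measure_interior_of_null_frontier ((convex_SG u x).addHaar_frontier volume)

theorem pairwise_disjoint_interior_SG {ι : Type*} {d : ι → EuclideanSpace ℝ (Fin 2)}
    (hd : Injective d) :
    Pairwise (Disjoint on fun k => interior (SG u (d k))) := fun _ _ hij =>
  disjoint_left.2 fun _ hpi hpj =>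
    notMem_SG_of_mem_interior_SG (hd.ne hij) hpi (interior_subset hpj)

theorem disjoint_interior_SG_SGs {E : Set (EuclideanSpace ℝ (Fin 2))} (hx : x ∉ E) :
    Disjoint (interior (SG u x)) (SGs u E) := by
  refine disjoint_left.2 fun p hp hpE => ?_
  obtain ⟨y, hy, hpy⟩ := mem_iUnion₂.1 hpE
  exact notMem_SG_of_mem_interior_SG (ne_of_mem_of_not_mem hy hx).symm hp hpy

theorem SG_subset_SGs {E : Set (EuclideanSpace ℝ (Fin 2))} (hx : x ∈ E) :
    SG u x ⊆ SGs u E :=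
  subset_biUnion_of_mem (u := SG u) hx

theorem SGs_mono {E F : Set (EuclideanSpace ℝ (Fin 2))} (hEF : E ⊆ F) : SGs u E ⊆ SGs u F :=
  biUnion_subset_biUnion_left hEF

end Subgradient

theorem stmt6_general (u : EuclideanSpace ℝ (Fin 2) → ℝ)
    (K : ℕ) (d : Fin K → EuclideanSpace ℝ (Fin 2)) (hd : Function.Injective d)
    (α : Fin K → ℝ) (hsum : ∑ k, α k = Real.pi)
    (hmass : ∀ k, volume (SG u (d k)) = ENNReal.ofReal (α k))
    (hsub : SGs u Set.univ ⊆ Metric.closedBall 0 1) :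
    volume (SGs u (Set.univ \ Set.range d)) = 0 := by
  set U := ⋃ k, interior (SG u (d k))
  have hU_ball : U ⊆ Metric.closedBall 0 1 :=
    iUnion_subset fun k => interior_subset.trans ((SG_subset_SGs (mem_univ _)).trans hsub)
  have hball_le_U : volume (Metric.closedBall (0 : EuclideanSpace ℝ (Fin 2)) 1) ≤ volume U :=
    calc volume (Metric.closedBall (0 : EuclideanSpace ℝ (Fin 2)) 1)
        = ENNReal.ofReal (∑ k, α k) := by simp [hsum]
      _ ≤ ∑ k, ENNReal.ofReal (α k) :=
        Finset.le_sum_of_subadditive _ ENNReal.ofReal_zero.le (fun _ _ => ENNReal.ofReal_add_le) _ _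
      _ = volume U := by
        rw [measure_iUnion (pairwise_disjoint_interior_SG hd)
          fun k => isOpen_interior.measurableSet, tsum_fintype]
        simp only [volume_interior_SG, hmass]
  have hnull : volume (Metric.closedBall 0 1 \ U) = 0 :=
    (ae_eq_set.1 (ae_eq_of_subset_of_measure_ge hU_ball hball_le_U
      (MeasurableSet.iUnion fun k => isOpen_interior.measurableSet).nullMeasurableSet
      measure_closedBall_lt_top.ne)).2
  refine measure_mono_null (subset_sdiff.2 ⟨(SGs_mono sdiff_subset).trans hsub, ?_⟩) hnull
  exact disjoint_iUnion_right.2 fun k => (disjoint_interior_SG_SGs fun h => h.2 ⟨k, rfl⟩).symm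

/-- if u is convex with |∂u(d_k)| = α_k > 0, Σα_k = π, and
∂u(ℝ²) ⊆ B(0,1), then |∂u(ℝ² \ ∪_k {d_k})| = 0. -/
theorem stmt6 (u : EuclideanSpace ℝ (Fin 2) → ℝ) (hu : ConvexOn ℝ Set.univ u)
    (K : ℕ) (d : Fin K → EuclideanSpace ℝ (Fin 2)) (hd : Function.Injective d)
    (α : Fin K → ℝ) (hα : ∀ k, 0 < α k) (hsum : ∑ k, α k = Real.pi)
    (hmass : ∀ k, volume (SG u (d k)) = ENNReal.ofReal (α k))
    (hsub : SGs u Set.univ ⊆ Metric.closedBall 0 1) :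
    volume (SGs u (Set.univ \ Set.range d)) = 0 :=
  stmt6_general u K d hd α hsum hmass hsub
end

section
/- Let u be a convex Aleksandrov solution of the Monge–Ampère equation with atomic right-hand side: |∂u(E)| = Σ_k α_k δ_{d_k}(E) for all measurable E ⊆ ℝ², with ∂u(ℝ²) ⊆ B(0,1), α_k > 0, Σ α_k = π. Then the Legendre–Fenchel dual u* restricted to B(0,1) satisfies u*(y) = max_k {d_k·y − u(d_k)} for all y ∈ B(0,1). -/
open RealInnerProductSpace MeasureTheory Classical

/-- if u is a convex Aleksandrov solution with atomic right-hand side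
(|∂u(E)| = Σ_k α_k δ_{d_k}(E), ∂u(ℝ²) ⊆ B(0,1), α_k > 0, Σα_k = π), then on the closed
unit ball u*(y) = max_k {d_k·y − u(d_k)}. -/
theorem stmt7 (u : EuclideanSpace ℝ (Fin 2) → ℝ) (hu : ConvexOn ℝ Set.univ u)
    (K : ℕ) [NeZero K] (d : Fin K → EuclideanSpace ℝ (Fin 2)) (hd : Function.Injective d)
    (α : Fin K → ℝ) (hα : ∀ k, 0 < α k) (hsum : ∑ k, α k = Real.pi)
    (hmass : ∀ E : Set (EuclideanSpace ℝ (Fin 2)), MeasurableSet E →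
      volume (SGs u E) = ∑ k, (if d k ∈ E then ENNReal.ofReal (α k) else 0))
    (hsub : SGs u Set.univ ⊆ Metric.closedBall 0 1)
    (uStar : EuclideanSpace ℝ (Fin 2) → ℝ)
    (hStar : ∀ y, uStar y = ⨆ x, (⟪x, y⟫ - u x)) :
    ∀ y ∈ Metric.closedBall (0 : EuclideanSpace ℝ (Fin 2)) 1,
      uStar y = ⨆ k, (⟪d k, y⟫ - u (d k)) := by
  -- notation
  set v : EuclideanSpace ℝ (Fin 2) → ℝ := fun y => ⨆ k, (⟪d k, y⟫ - u (d k)) with hv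
  -- each SG is closed
  have hSGclosed : ∀ x, IsClosed (SG u x) := by
    intro x
    have : SG u x = ⋂ z, {p : EuclideanSpace ℝ (Fin 2) | u x + ⟪p, z - x⟫ ≤ u z} := by
      ext p; simp [SG, Set.mem_iInter]
    rw [this]
    exact isClosed_iInter fun z =>
      isClosed_le (continuous_const.add (continuous_id.inner continuous_const)) continuous_const
  -- S : union of SG u (d k)
  set S : Set (EuclideanSpace ℝ (Fin 2)) := ⋃ k, SG u (d k) with hS
  have hSclosed : IsClosed S := isClosed_iUnion_of_finite fun k => hSGclosed (d k)
  have hSeq : SGs u (Set.range d) = S := by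
    simp [SGs, hS, Set.biUnion_range]
  have hSvol : volume S = ENNReal.ofReal Real.pi := by
    rw [← hSeq, hmass _ (Set.finite_range d).measurableSet]
    refine Eq.trans (Finset.sum_congr rfl fun k _ => if_pos (Set.mem_range_self k)) ?_
    rw [← ENNReal.ofReal_sum_of_nonneg (fun k _ => (hα k).le), hsum]
  have hSsub : S ⊆ Metric.closedBall 0 1 := by
    refine Set.Subset.trans ?_ hsub
    rw [← hSeq]
    exact Set.biUnion_subset_biUnion_left (by simp)
  have hball : volume (Metric.closedBall (0 : EuclideanSpace ℝ (Fin 2)) 1)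
      = ENNReal.ofReal Real.pi := by
    rw [EuclideanSpace.volume_closedBall]
    norm_num [Real.Gamma_two, Real.sq_sqrt Real.pi_nonneg]
  -- the open ball is contained in S
  have hballS : Metric.ball (0 : EuclideanSpace ℝ (Fin 2)) 1 ⊆ S := by
    by_contra hcon
    obtain ⟨p, hp, hpS⟩ := Set.not_subset.mp hcon
    have hopen : IsOpen (Metric.ball (0 : EuclideanSpace ℝ (Fin 2)) 1 \ S) :=
      Metric.isOpen_ball.sdiff hSclosed
    have hpos : 0 < volume (Metric.ball (0 : EuclideanSpace ℝ (Fin 2)) 1 \ S) :=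
      hopen.measure_pos volume ⟨p, hp, hpS⟩
    have hdiff : volume (Metric.closedBall (0 : EuclideanSpace ℝ (Fin 2)) 1 \ S) = 0 := by
      rw [measure_diff hSsub hSclosed.measurableSet.nullMeasurableSet
        (by rw [hSvol]; exact ENNReal.ofReal_ne_top), hball, hSvol, tsub_self]
    have : volume (Metric.ball (0 : EuclideanSpace ℝ (Fin 2)) 1 \ S) = 0 :=
      measure_mono_null (Set.diff_subset_diff_left Metric.ball_subset_closedBall) hdiff
    exact absurd this hpos.ne'
  -- bddAbove facts
  have hbddk : ∀ y : EuclideanSpace ℝ (Fin 2),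
      BddAbove (Set.range fun k => ⟪d k, y⟫ - u (d k)) := fun y =>
    Set.Finite.bddAbove (Set.finite_range _)
  have hbddabs : ∀ y : EuclideanSpace ℝ (Fin 2),
      BddAbove (Set.range fun k => |⟪d k, y⟫|) := fun y =>
    Set.Finite.bddAbove (Set.finite_range _)
  -- key inequality for p in the open ball
  have hkey : ∀ p ∈ Metric.ball (0 : EuclideanSpace ℝ (Fin 2)) 1,
      ∀ x, ⟪x, p⟫ - u x ≤ v p := by
    intro p hp x
    obtain ⟨k, hk⟩ := Set.mem_iUnion.mp (hballS hp)
    have h1 : u (d k) + ⟪p, x - d k⟫ ≤ u x := hk x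
    have h2 : ⟪x, p⟫ - u x ≤ ⟪d k, p⟫ - u (d k) := by
      have : ⟪p, x - d k⟫ = ⟪x, p⟫ - ⟪d k, p⟫ := by
        rw [inner_sub_right, real_inner_comm p x, real_inner_comm p (d k)]
      linarith
    exact h2.trans (le_ciSup (hbddk p) k)
  -- key inequality on the closed ball by approximation
  intro y hy
  have hC0 : (0:ℝ) ≤ ⨆ k, |⟪d k, y⟫| :=
    le_trans (abs_nonneg _) (le_ciSup (hbddabs y) (Classical.arbitrary (Fin K)))
  set C : ℝ := ⨆ k, |⟪d k, y⟫| with hCdef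
  have hkey2 : ∀ x, ⟪x, y⟫ - u x ≤ v y := by
    intro x
    refine le_of_forall_pos_le_add ?_
    intro ε hε
    set B : ℝ := C + |⟪x, y⟫| + 1 with hB
    have hB1 : (1:ℝ) ≤ B := by have := abs_nonneg (⟪x, y⟫); simp only [hB]; linarith
    have hBpos : (0:ℝ) < B := by linarith
    set δ : ℝ := min (ε / B) (1/2) with hδ
    have hδpos : 0 < δ := lt_min (div_pos hε hBpos) (by norm_num)
    have hδ1 : δ < 1 := lt_of_le_of_lt (min_le_right _ _) (by norm_num)
    set t : ℝ := 1 - δ with ht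
    have ht0 : 0 < t := by simp [ht]; linarith
    have ht1 : t < 1 := by simp [ht]; linarith
    -- t • y is in the open ball
    have hty : t • y ∈ Metric.ball (0 : EuclideanSpace ℝ (Fin 2)) 1 := by
      rw [Metric.mem_ball, dist_zero_right, norm_smul, Real.norm_eq_abs,
        abs_of_pos ht0]
      calc t * ‖y‖ ≤ t * 1 := by
            have := Metric.mem_closedBall.mp hy
            rw [dist_zero_right] at this
            nlinarith
        _ < 1 := by linarith
    have h1 : ⟪x, t • y⟫ - u x ≤ v (t • y) := hkey _ hty x
    have h2 : ⟪x, t • y⟫ = t * ⟪x, y⟫ := real_inner_smul_right x y t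
    -- v (t • y) ≤ v y + (1 - t) * C
    have h3 : v (t • y) ≤ v y + (1 - t) * C := by
      refine ciSup_le fun k => ?_
      have hik : ⟪d k, t • y⟫ = t * ⟪d k, y⟫ := real_inner_smul_right _ _ t
      have hk1 : ⟪d k, y⟫ - u (d k) ≤ v y := le_ciSup (hbddk y) k
      have hk2 : |⟪d k, y⟫| ≤ C := le_ciSup (hbddabs y) k
      have habs : -(⟪d k, y⟫) ≤ |⟪d k, y⟫| := neg_le_abs _
      rw [hik]
      nlinarith [abs_nonneg (⟪d k, y⟫)]
    have h4 : ⟪x, y⟫ - u x ≤ v y + (1 - t) * C + (1 - t) * |⟪x, y⟫| := by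
      have hax : ⟪x, y⟫ ≤ |⟪x, y⟫| := le_abs_self _
      rw [h2] at h1
      nlinarith
    have h5 : (1 - t) * C + (1 - t) * |⟪x, y⟫| ≤ ε := by
      have h1t : 1 - t = δ := by simp [ht]
      have hδB : δ * B ≤ ε := by
        have : δ ≤ ε / B := min_le_left _ _
        calc δ * B ≤ (ε / B) * B := by nlinarith
          _ = ε := div_mul_cancel₀ ε hBpos.ne'
      rw [h1t]
      nlinarith [abs_nonneg (⟪x, y⟫)]
    linarith
  -- conclude
  rw [hStar y]
  refine le_antisymm (ciSup_le hkey2) ?_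
  have hbddx : BddAbove (Set.range fun x => ⟪x, y⟫ - u x) :=
    ⟨v y, by rintro r ⟨x, rfl⟩; exact hkey2 x⟩
  exact ciSup_le fun k => le_ciSup hbddx (d k)
end

section
/- Let u be as in the Aleksandrov solution setting (|∂u(E)| = Σ_k α_k δ_{d_k}(E), ∂u(ℝ²) ⊆ B(0,1), Σ α_k = π = |B(0,1)|). Define the cells C_k = {y ∈ B(0,1) : u* is differentiable at y and ∇u*(y) = d_k}. Then |C_k| = α_k for every k. -/
open RealInnerProductSpace MeasureTheory Classical

/-!
Write `a_k w = ⟪d_k, w⟫ - u (d_k)`. Every `p ∈ ∂u(d_k)` satisfies `⟪x, p⟫ - u x ≤ a_k p` for all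
`x`. The sets `∂u(d_k)` lie in the closed unit disc and have total area `π`, so their union is
dense in the open disc; by continuity, on the open disc every `⟪x, ·⟫ - u x` stays below
`max_k a_k`, i.e. `u* = max_k a_k` there. On the open cell `V_k` of the disc where `a_k` strictly
dominates, `u*` is affine with gradient `d_k`. Up to the unit circle and the lines `a_j = a_k`,
`∂u(d_k) ⊆ V_k`, so `|V_k| ≥ α_k`; the `V_k` are disjoint in a disc of area `π = ∑ α_k`, hence
`|V_k| = α_k` and they fill the disc up to a null set. Finally `V_k ⊆ C_k`, and `C_k` misses
every `V_j` with `j ≠ k` by uniqueness of the gradient.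
-/

open Set Metric

section Topology

variable {X : Type*} [TopologicalSpace X]

theorem exists_le_of_mem_closure {ι : Type*} [Finite ι] {f : ι → X → ℝ} {g : X → ℝ}
    (hf : ∀ k, Continuous (f k)) (hg : Continuous g) {S : Set X}
    (h : ∀ w ∈ S, ∃ k, g w ≤ f k w) {w : X} (hw : w ∈ closure S) : ∃ k, g w ≤ f k w := by
  have hclosed : IsClosed (⋃ k, {w | g w ≤ f k w}) :=
    isClosed_iUnion_of_finite fun k => isClosed_le hg (hf k)
  have hS : S ⊆ ⋃ k, {w | g w ≤ f k w} := fun w hw => mem_iUnion.2 (h w hw)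
  exact mem_iUnion.1 (closure_minimal hS hclosed hw)

variable [MeasurableSpace X] [OpensMeasurableSpace X]

theorem interior_subset_closure_of_measure_le {μ : Measure X} [μ.IsOpenPosMeasure]
    {S T : Set X} (hST : S ⊆ T) (hT : μ T ≠ ⊤) (h : μ T ≤ μ S) :
    interior T ⊆ closure S := by
  intro x hxT
  by_contra hxS
  set o := interior T \ closure S
  have ho : IsOpen o := isOpen_interior.sdiff isClosed_closure
  have hoT : o ⊆ T := sdiff_subset.trans interior_subset
  have hpos : 0 < μ o := ho.measure_pos μ ⟨x, hxT, hxS⟩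
  have hS : S ⊆ T \ o := fun y hy => ⟨hST hy, fun hyo => hyo.2 (subset_closure hy)⟩
  have hlt : μ (T \ o) < μ T := by
    rw [measure_sdiff hoT ho.measurableSet.nullMeasurableSet
      (ne_top_of_le_ne_top hT (measure_mono hoT))]
    exact ENNReal.sub_lt_self hT (hpos.trans_le (measure_mono hoT)).ne' hpos.ne'
  exact (h.trans (measure_mono hS)).not_gt hlt

end Topology

section Partition

variable {X ι : Type*} [MeasurableSpace X] [Fintype ι] {μ : Measure X} {T : Set X}
  {V : ι → Set X} {m : ι → ENNReal}

theorem sum_measure_le_of_disjoint (hVT : ∀ k, V k ⊆ T) (hV : ∀ k, MeasurableSet (V k))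
    (hdisj : Pairwise (Function.onFun Disjoint V)) : ∑ k, μ (V k) ≤ μ T := by
  have hU := measure_iUnion (μ := μ) hdisj hV
  rw [tsum_fintype] at hU
  rw [← hU]
  exact measure_mono (iUnion_subset hVT)

theorem measure_eq_of_le_of_sum_le (hVT : ∀ k, V k ⊆ T) (hV : ∀ k, MeasurableSet (V k))
    (hdisj : Pairwise (Function.onFun Disjoint V)) (hT : μ T ≠ ⊤) (hsum : μ T ≤ ∑ k, m k)
    (hm : ∀ k, m k ≤ μ (V k)) (k : ι) : μ (V k) = m k := by
  have hV_le := sum_measure_le_of_disjoint (μ := μ) hVT hV hdisj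
  have hmV : ∑ j ∈ Finset.univ.erase k, m j ≤ ∑ j ∈ Finset.univ.erase k, μ (V j) :=
    Finset.sum_le_sum fun j _ => hm j
  have hfin : ∑ j ∈ Finset.univ.erase k, m j ≠ ⊤ :=
    ne_top_of_le_ne_top hT <| hmV.trans <|
      (Finset.sum_le_sum_of_subset (Finset.erase_subset k _)).trans hV_le
  refine le_antisymm (ENNReal.le_of_add_le_add_right hfin ?_) (hm k)
  calc μ (V k) + ∑ j ∈ Finset.univ.erase k, m j
      ≤ μ (V k) + ∑ j ∈ Finset.univ.erase k, μ (V j) := by gcongr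
    _ ≤ μ T := by rwa [Finset.add_sum_erase _ (fun j => μ (V j)) (Finset.mem_univ k)]
    _ ≤ ∑ j, m j := hsum
    _ = m k + ∑ j ∈ Finset.univ.erase k, m j := (Finset.add_sum_erase _ _ (Finset.mem_univ k)).symm

theorem measure_diff_iUnion_eq_zero (hVT : ∀ k, V k ⊆ T) (hV : ∀ k, MeasurableSet (V k))
    (hdisj : Pairwise (Function.onFun Disjoint V)) (hT : μ T ≠ ⊤) (hsum : μ T ≤ ∑ k, m k)
    (hm : ∀ k, m k ≤ μ (V k)) : μ (T \ ⋃ k, V k) = 0 := by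
  have hUT : (⋃ k, V k) ⊆ T := iUnion_subset hVT
  rw [measure_sdiff hUT (MeasurableSet.iUnion hV).nullMeasurableSet
    (ne_top_of_le_ne_top hT (measure_mono hUT)), measure_iUnion hdisj hV, tsum_fintype]
  exact tsub_eq_zero_of_le (hsum.trans (Finset.sum_le_sum fun k _ => hm k))

end Partition

section InnerProductSpace

variable {E : Type*} [NormedAddCommGroup E] [InnerProductSpace ℝ E]

theorem hasGradientAt_of_eqOn_inner_sub [CompleteSpace E] {f : E → ℝ} {s : Set E} {v y : E}
    {c : ℝ} (hs : IsOpen s) (hf : EqOn f (fun w => ⟪v, w⟫ - c) s) (hy : y ∈ s) :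
    HasGradientAt f v y := by
  have haff : HasGradientAt (fun w => ⟪v, w⟫ - c) v y := by
    rw [hasGradientAt_iff_hasFDerivAt]
    exact (InnerProductSpace.toDual ℝ E v).hasFDerivAt.sub_const c
  exact haff.congr_of_eventuallyEq (Filter.eventuallyEq_of_mem (hs.mem_nhds hy) hf)

theorem measure_inner_eq_eq_zero [FiniteDimensional ℝ E] [MeasurableSpace E] [BorelSpace E]
    (μ : Measure E) [μ.IsAddHaarMeasure] {v : E} (hv : v ≠ 0) (c : ℝ) :
    μ {w | ⟪v, w⟫ = c} = 0 := by
  rcases eq_empty_or_nonempty {w : E | ⟪v, w⟫ = c} with hempty | ⟨p, hp : ⟪v, p⟫ = c⟩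
  · rw [hempty, measure_empty]
  set H := AffineSubspace.mk' p (LinearMap.ker (innerₛₗ ℝ v))
  have hH : H ≠ ⊤ := by
    intro htop
    have hv_mem : v ∈ H.direction := by rw [htop, AffineSubspace.direction_top]; trivial
    rw [AffineSubspace.direction_mk', LinearMap.mem_ker, innerₛₗ_apply_apply] at hv_mem
    exact hv (inner_self_eq_zero.1 hv_mem)
  refine measure_mono_null (fun w hw => ?_) (Measure.addHaar_affineSubspace μ H hH)
  rw [SetLike.mem_coe, AffineSubspace.mem_mk', LinearMap.mem_ker, innerₛₗ_apply_apply,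
    vsub_eq_sub, inner_sub_right, hw, hp, sub_self]

variable {ι : Type*}

def affineCell (d : ι → E) (c : ι → ℝ) (k : ι) : Set E :=
  {w | ∀ j ≠ k, ⟪d j, w⟫ - c j < ⟪d k, w⟫ - c k}

theorem isOpen_affineCell [Finite ι] (d : ι → E) (c : ι → ℝ) (k : ι) :
    IsOpen (affineCell d c k) := by
  simp only [affineCell, ofPred_forall]
  exact isOpen_iInter_of_finite fun j => isOpen_iInter_of_finite fun _ =>
    isOpen_lt (continuous_const.inner continuous_id |>.sub continuous_const)
      (continuous_const.inner continuous_id |>.sub continuous_const)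

theorem pairwise_disjoint_affineCell (d : ι → E) (c : ι → ℝ) :
    Pairwise (Function.onFun Disjoint (affineCell d c)) := fun j k hjk =>
  disjoint_left.2 fun _ hj hk => (hj k hjk.symm).not_gt (hk j hjk)

theorem measure_setOf_forall_le_diff_affineCell [Countable ι] [FiniteDimensional ℝ E]
    [MeasurableSpace E] [BorelSpace E] (μ : Measure E) [μ.IsAddHaarMeasure] {d : ι → E}
    (hd : Function.Injective d) (c : ι → ℝ) (k : ι) :
    μ ({w | ∀ j, ⟪d j, w⟫ - c j ≤ ⟪d k, w⟫ - c k} \ affineCell d c k) = 0 := by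
  refine measure_mono_null (t := ⋃ j, ⋃ (_ : j ≠ k), {w | ⟪d j - d k, w⟫ = c j - c k}) ?_
    (measure_iUnion_null fun j => measure_iUnion_null fun hjk =>
    measure_inner_eq_eq_zero μ (sub_ne_zero.2 (hd.ne hjk)) (c j - c k))
  rintro w ⟨hle, hnot⟩
  simp only [affineCell, mem_ofPred_eq, not_forall, not_lt] at hnot
  obtain ⟨j, hjk, hge⟩ := hnot
  refine mem_iUnion₂.2 ⟨j, hjk, ?_⟩
  rw [mem_ofPred_eq, inner_sub_left]
  linarith [hle j]

theorem conj_eq_of_mem_affineCell {u uStar : E → ℝ} (hStar : ∀ y, uStar y = ⨆ x, (⟪x, y⟫ - u x))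
    {d : ι → E} {k : ι} {w : E} (hmax : ∀ x, ∃ j, ⟪x, w⟫ - u x ≤ ⟪d j, w⟫ - u (d j))
    (hw : w ∈ affineCell d (u ∘ d) k) : uStar w = ⟪d k, w⟫ - u (d k) := by
  have hle : ∀ x, ⟪x, w⟫ - u x ≤ ⟪d k, w⟫ - u (d k) := by
    intro x
    obtain ⟨j, hj⟩ := hmax x
    rcases eq_or_ne j k with rfl | hjk
    · exact hj
    · exact hj.trans (hw j hjk).le
  rw [hStar]
  exact le_antisymm (ciSup_le hle) (le_ciSup ⟨_, forall_mem_range.2 hle⟩ (d k))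

theorem hasGradientAt_conj_of_mem_affineCell [CompleteSpace E] [Finite ι] {u uStar : E → ℝ}
    (hStar : ∀ y, uStar y = ⨆ x, (⟪x, y⟫ - u x)) {d : ι → E} {s : Set E} (hs : IsOpen s)
    (hmax : ∀ w ∈ s, ∀ x, ∃ j, ⟪x, w⟫ - u x ≤ ⟪d j, w⟫ - u (d j)) (k : ι) :
    ∀ y ∈ s ∩ affineCell d (u ∘ d) k, HasGradientAt uStar (d k) y :=
  fun _ hy => hasGradientAt_of_eqOn_inner_sub (hs.inter (isOpen_affineCell d _ k))
    (fun w hw => conj_eq_of_mem_affineCell hStar (hmax w hw.1) hw.2) hy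

theorem setOf_hasGradientAt_subset [CompleteSpace E] {f : E → ℝ} {d : ι → E}
    (hd : Function.Injective d) {V : ι → Set E} (hV : ∀ j, ∀ y ∈ V j, HasGradientAt f (d j) y)
    (T : Set E) (k : ι) :
    {y | y ∈ T ∧ HasGradientAt f (d k) y} ⊆ V k ∪ (T \ ⋃ j, V j) := by
  rintro y ⟨hyT, hy⟩
  by_cases hyV : y ∈ ⋃ j, V j
  · obtain ⟨j, hj⟩ := mem_iUnion.1 hyV
    obtain rfl : j = k := hd ((hV j y hj).unique hy)
    exact Or.inl hj
  · exact Or.inr ⟨hyT, hyV⟩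

end InnerProductSpace

local notation "ℝ²" => EuclideanSpace ℝ (Fin 2)

theorem inner_sub_le_of_mem_SG {u : ℝ² → ℝ} {x p : ℝ²} (hp : p ∈ SG u x) (z : ℝ²) :
    ⟪z, p⟫ - u z ≤ ⟪x, p⟫ - u x := by
  have h := hp z
  rw [inner_sub_right, real_inner_comm z, real_inner_comm x] at h
  linarith

theorem SGs_singleton (u : ℝ² → ℝ) (x : ℝ²) : SGs u {x} = SG u x := by
  simp [SGs]

theorem SGs_range {ι : Type*} (u : ℝ² → ℝ) (d : ι → ℝ²) :
    SGs u (range d) = ⋃ k, SG u (d k) := by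
  simp [SGs]

section Aleksandrov

variable {ι : Type*} [Fintype ι] {u : ℝ² → ℝ} {d : ι → ℝ²} {α : ι → ℝ}

theorem volume_SG_eq (hd : Function.Injective d)
    (hmass : ∀ E : Set ℝ², MeasurableSet E →
      volume (SGs u E) = ∑ k, (if d k ∈ E then ENNReal.ofReal (α k) else 0)) (k : ι) :
    volume (SG u (d k)) = ENNReal.ofReal (α k) := by
  rw [← SGs_singleton, hmass _ (measurableSet_singleton _)]
  simp [hd.eq_iff]

theorem volume_iUnion_SG_eq (hα : ∀ k, 0 ≤ α k) (hsum : ∑ k, α k = Real.pi)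
    (hmass : ∀ E : Set ℝ², MeasurableSet E →
      volume (SGs u E) = ∑ k, (if d k ∈ E then ENNReal.ofReal (α k) else 0)) :
    volume (⋃ k, SG u (d k)) = ENNReal.ofReal Real.pi := by
  rw [← SGs_range, hmass _ (finite_range d).measurableSet, ← hsum,
    ENNReal.ofReal_sum_of_nonneg fun k _ => hα k]
  simp

theorem SG_subset_closedBall (hsub : SGs u univ ⊆ closedBall 0 1) (x : ℝ²) :
    SG u x ⊆ closedBall 0 1 :=
  (subset_biUnion_of_mem (u := SG u) (mem_univ x)).trans hsub

theorem exists_le_inner_sub_of_mem_ball (hα : ∀ k, 0 ≤ α k) (hsum : ∑ k, α k = Real.pi)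
    (hmass : ∀ E : Set ℝ², MeasurableSet E →
      volume (SGs u E) = ∑ k, (if d k ∈ E then ENNReal.ofReal (α k) else 0))
    (hsub : SGs u univ ⊆ closedBall 0 1) {w : ℝ²} (hw : w ∈ ball 0 1) (x : ℝ²) :
    ∃ k, ⟪x, w⟫ - u x ≤ ⟪d k, w⟫ - u (d k) := by
  have hdense : ball (0 : ℝ²) 1 ⊆ closure (⋃ k, SG u (d k)) := by
    rw [← interior_closedBall _ one_ne_zero]
    refine interior_subset_closure_of_measure_le (μ := volume)
      (iUnion_subset fun k => SG_subset_closedBall hsub (d k)) ?_ ?_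
    · simp
    · simp [volume_iUnion_SG_eq hα hsum hmass]
  refine exists_le_of_mem_closure (fun k => continuous_const.inner continuous_id |>.sub
    continuous_const) (continuous_const.inner continuous_id |>.sub continuous_const)
    (fun p hp => ?_) (hdense hw)
  obtain ⟨k, hk⟩ := mem_iUnion.1 hp
  exact ⟨k, inner_sub_le_of_mem_SG hk x⟩

theorem ofReal_le_volume_ball_inter_affineCell (hd : Function.Injective d)
    (hmass : ∀ E : Set ℝ², MeasurableSet E →
      volume (SGs u E) = ∑ k, (if d k ∈ E then ENNReal.ofReal (α k) else 0))
    (hsub : SGs u univ ⊆ closedBall 0 1) (k : ι) :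
    ENNReal.ofReal (α k) ≤ volume (ball 0 1 ∩ affineCell d (u ∘ d) k) := by
  set M := {w : ℝ² | ∀ j, ⟪d j, w⟫ - (u ∘ d) j ≤ ⟪d k, w⟫ - (u ∘ d) k}
  have hSG : SG u (d k) ⊆ (ball 0 1 ∩ affineCell d (u ∘ d) k) ∪
      (sphere 0 1 ∪ (M \ affineCell d (u ∘ d) k)) := by
    intro p hp
    have hpM : p ∈ M := fun j => inner_sub_le_of_mem_SG hp (d j)
    by_cases hcell : p ∈ affineCell d (u ∘ d) k
    · rcases (mem_closedBall.1 (SG_subset_closedBall hsub _ hp)).lt_or_eq with hball | hsphere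
      · exact Or.inl ⟨mem_ball.2 hball, hcell⟩
      · exact Or.inr (Or.inl (mem_sphere.2 hsphere))
    · exact Or.inr (Or.inr ⟨hpM, hcell⟩)
  have hnull : volume (sphere (0 : ℝ²) 1 ∪ (M \ affineCell d (u ∘ d) k)) = 0 :=
    measure_union_null (Measure.addHaar_sphere _ _ _)
      (measure_setOf_forall_le_diff_affineCell _ hd _ k)
  calc ENNReal.ofReal (α k) = volume (SG u (d k)) := (volume_SG_eq hd hmass k).symm
    _ ≤ volume (ball 0 1 ∩ affineCell d (u ∘ d) k) +
        volume (sphere (0 : ℝ²) 1 ∪ (M \ affineCell d (u ∘ d) k)) :=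
      (measure_mono hSG).trans (measure_union_le _ _)
    _ = volume (ball 0 1 ∩ affineCell d (u ∘ d) k) := by rw [hnull, add_zero]

end Aleksandrov

theorem stmt8_general (u : EuclideanSpace ℝ (Fin 2) → ℝ)
    (K : ℕ) (d : Fin K → EuclideanSpace ℝ (Fin 2)) (hd : Function.Injective d)
    (α : Fin K → ℝ) (hα : ∀ k, 0 < α k) (hsum : ∑ k, α k = Real.pi)
    (hmass : ∀ E : Set (EuclideanSpace ℝ (Fin 2)), MeasurableSet E →
      volume (SGs u E) = ∑ k, (if d k ∈ E then ENNReal.ofReal (α k) else 0))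
    (hsub : SGs u Set.univ ⊆ Metric.closedBall 0 1)
    (uStar : EuclideanSpace ℝ (Fin 2) → ℝ)
    (hStar : ∀ y, uStar y = ⨆ x, (⟪x, y⟫ - u x))
    (C : Fin K → Set (EuclideanSpace ℝ (Fin 2)))
    (hC : ∀ k, C k = {y | y ∈ Metric.closedBall (0 : EuclideanSpace ℝ (Fin 2)) 1 ∧
      HasGradientAt uStar (d k) y}) :
    ∀ k, volume (C k) = ENNReal.ofReal (α k) := by
  have hα' : ∀ k, 0 ≤ α k := fun k => (hα k).le
  set V : Fin K → Set ℝ² := fun k => ball 0 1 ∩ affineCell d (u ∘ d) k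
  have hV : ∀ k, MeasurableSet (V k) :=
    fun k => (isOpen_ball.inter (isOpen_affineCell d _ k)).measurableSet
  have hVT : ∀ k, V k ⊆ closedBall 0 1 := fun k => inter_subset_left.trans ball_subset_closedBall
  have hdisj : Pairwise (Function.onFun Disjoint V) := fun j k hjk =>
    (pairwise_disjoint_affineCell d _ hjk).mono inter_subset_right inter_subset_right
  have hT : volume (closedBall (0 : ℝ²) 1) ≤ ∑ k, ENNReal.ofReal (α k) := by
    simp [← ENNReal.ofReal_sum_of_nonneg fun k _ => hα' k, hsum]
  have hm := ofReal_le_volume_ball_inter_affineCell hd hmass hsub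
  have hgrad : ∀ k, ∀ y ∈ V k, HasGradientAt uStar (d k) y :=
    hasGradientAt_conj_of_mem_affineCell hStar isOpen_ball fun _ hw =>
      exists_le_inner_sub_of_mem_ball hα' hsum hmass hsub hw
  have hVvol := measure_eq_of_le_of_sum_le hVT hV hdisj (by simp) hT hm
  have hrest := measure_diff_iUnion_eq_zero hVT hV hdisj (by simp) hT hm
  intro k
  rw [hC k]
  refine le_antisymm ?_ ?_
  · calc volume {y | y ∈ closedBall 0 1 ∧ HasGradientAt uStar (d k) y}
        ≤ volume (V k) + volume (closedBall 0 1 \ ⋃ j, V j) :=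
          (measure_mono (setOf_hasGradientAt_subset hd hgrad _ k)).trans (measure_union_le _ _)
      _ = ENNReal.ofReal (α k) := by rw [hrest, add_zero, hVvol]
  · rw [← hVvol k]
    exact measure_mono fun y hy => ⟨ball_subset_closedBall hy.1, hgrad k y hy⟩

/-- in the Aleksandrov solution setting, the cells
C_k = {y ∈ B(0,1) : ∇u*(y) = d_k} satisfy |C_k| = α_k. -/
theorem stmt8 (u : EuclideanSpace ℝ (Fin 2) → ℝ) (hu : ConvexOn ℝ Set.univ u)
    (K : ℕ) [NeZero K] (d : Fin K → EuclideanSpace ℝ (Fin 2)) (hd : Function.Injective d)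
    (α : Fin K → ℝ) (hα : ∀ k, 0 < α k) (hsum : ∑ k, α k = Real.pi)
    (hmass : ∀ E : Set (EuclideanSpace ℝ (Fin 2)), MeasurableSet E →
      volume (SGs u E) = ∑ k, (if d k ∈ E then ENNReal.ofReal (α k) else 0))
    (hsub : SGs u Set.univ ⊆ Metric.closedBall 0 1)
    (uStar : EuclideanSpace ℝ (Fin 2) → ℝ)
    (hStar : ∀ y, uStar y = ⨆ x, (⟪x, y⟫ - u x))
    (C : Fin K → Set (EuclideanSpace ℝ (Fin 2)))
    (hC : ∀ k, C k = {y | y ∈ Metric.closedBall (0 : EuclideanSpace ℝ (Fin 2)) 1 ∧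
      HasGradientAt uStar (d k) y}) :
    ∀ k, volume (C k) = ENNReal.ofReal (α k) :=
  stmt8_general u K d hd α hα hsum hmass hsub uStar hStar C hC
end

section
/- Let A be a 2×2 real symmetric matrix. Then min over orthonormal pairs (ν, ν^⊥) of { (ν^T A ν)⁺ (ν^{⊥T} A ν^⊥)⁺ − (ν^T A ν)⁻ − (ν^{⊥T} A ν^⊥)⁻ } equals det A if A is positive semidefinite, and is strictly negative if A is not positive semidefinite. -/
/-!
In the orthonormal frame `(ν, ν⊥)` the form `A` has matrix `[[Q ν, B], [B, Q ν⊥]]` with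
`B = ν⊥ᵀ A ν`, and its determinant is still `det A`; hence `Q ν · Q ν⊥ = det A + B² ≥ det A`, with
equality along a principal direction of `A`. If `A` is positive semidefinite, `Q ν, Q ν⊥ ≥ 0` and the
convexified operator is exactly this product. Otherwise some unit `ν` has `Q ν < 0`, and then the
value at `ν` is at most `-(Q ν)⁻ = Q ν < 0`.
-/

open Matrix

def convexifiedProduct (s t : ℝ) : ℝ := max s 0 * max t 0 - max (-s) 0 - max (-t) 0

section ConvexifiedProduct

variable {s t : ℝ}

lemma convexifiedProduct_of_nonneg (hs : 0 ≤ s) (ht : 0 ≤ t) :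
    convexifiedProduct s t = s * t := by
  simp [convexifiedProduct, hs, ht]

lemma convexifiedProduct_neg_of_neg_left (hs : s < 0) (t : ℝ) : convexifiedProduct s t < 0 := by
  have : 0 ≤ max (-t) 0 := le_max_right _ _
  simp only [convexifiedProduct, max_eq_right hs.le, max_eq_left (neg_nonneg.2 hs.le)]
  linarith

lemma min_add_min_le_convexifiedProduct (s t : ℝ) :
    min s 0 + min t 0 ≤ convexifiedProduct s t := by
  have : 0 ≤ max s 0 * max t 0 := mul_nonneg (le_max_right _ _) (le_max_right _ _)
  have hs : min s 0 = -max (-s) 0 := by rw [← neg_zero, max_neg_neg, neg_neg, neg_zero]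
  have ht : min t 0 = -max (-t) 0 := by rw [← neg_zero, max_neg_neg, neg_neg, neg_zero]
  rw [convexifiedProduct, hs, ht]
  linarith

end ConvexifiedProduct

lemma exists_dotProduct_mulVec_neg {n : Type*} [Fintype n] {A : Matrix n n ℝ} (hA : A.IsSymm)
    (h : ¬ A.PosSemidef) : ∃ x, x ⬝ᵥ A *ᵥ x < 0 := by
  by_contra! hx
  exact h (.of_dotProduct_mulVec_nonneg (isHermitian_iff_isSymm.2 hA) (by simpa using hx))

def perp (ν : Fin 2 → ℝ) : Fin 2 → ℝ := ![-(ν 1), ν 0]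

section TwoByTwo

variable {A : Matrix (Fin 2) (Fin 2) ℝ}

lemma dotProduct_mulVec_fin_two (hA : A.IsSymm) (v w : Fin 2 → ℝ) :
    v ⬝ᵥ A *ᵥ w = A 0 0 * v 0 * w 0 + A 0 1 * (v 0 * w 1 + v 1 * w 0) + A 1 1 * v 1 * w 1 := by
  have : A 1 0 = A 0 1 := hA.apply 0 1
  simp only [dotProduct, mulVec, Fin.sum_univ_two, Fin.isValue, this]
  ring

/-- The matrix of `A` in the orthonormal frame `(ν, ν⊥)` has determinant `det A`. -/
lemma dotProduct_mulVec_mul_perp (hA : A.IsSymm) {ν : Fin 2 → ℝ} (hν : ν 0 ^ 2 + ν 1 ^ 2 = 1) :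
    (ν ⬝ᵥ A *ᵥ ν) * (perp ν ⬝ᵥ A *ᵥ perp ν) = A.det + (perp ν ⬝ᵥ A *ᵥ ν) ^ 2 := by
  simp only [dotProduct_mulVec_fin_two hA, perp, det_fin_two, hA.apply 0 1, Fin.isValue,
    cons_val_zero, cons_val_one, cons_val_fin_one, mul_neg, neg_mul, neg_neg]
  linear_combination (A 0 0 * A 1 1 - A 0 1 ^ 2) * (ν 0 ^ 2 + ν 1 ^ 2 + 1) * hν

lemma neg_le_dotProduct_mulVec (hA : A.IsSymm) {ν : Fin 2 → ℝ} (hν : ν 0 ^ 2 + ν 1 ^ 2 = 1) :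
    -(|A 0 0| + |A 0 1| + |A 1 1|) ≤ ν ⬝ᵥ A *ᵥ ν := by
  rw [dotProduct_mulVec_fin_two hA]
  nlinarith [neg_abs_le (A 0 0), neg_abs_le (A 1 1), abs_le.1 (le_refl |A 0 1|),
    sq_nonneg (ν 0 + ν 1), sq_nonneg (ν 0 - ν 1), sq_nonneg (ν 0), sq_nonneg (ν 1),
    abs_nonneg (A 0 0), abs_nonneg (A 0 1), abs_nonneg (A 1 1)]

/-- The principal directions of `A` make the angle `arg (a - c + 2 b i) / 2` with the first axis. -/
lemma exists_perp_dotProduct_mulVec_eq_zero (hA : A.IsSymm) :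
    ∃ ν : Fin 2 → ℝ, ν 0 ^ 2 + ν 1 ^ 2 = 1 ∧ perp ν ⬝ᵥ A *ᵥ ν = 0 := by
  set z : ℂ := ⟨A 0 0 - A 1 1, 2 * A 0 1⟩
  set θ := z.arg / 2
  refine ⟨![Real.cos θ, Real.sin θ], by simp, ?_⟩
  have hre := Complex.norm_mul_cos_arg z
  have him := Complex.norm_mul_sin_arg z
  have h2θ : z.arg = 2 * θ := by ring
  rw [h2θ, Real.cos_two_mul'] at hre
  rw [h2θ, Real.sin_two_mul] at him
  simp only [dotProduct_mulVec_fin_two hA, perp, Fin.isValue, cons_val_zero, cons_val_one,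
    cons_val_fin_one, mul_neg, neg_mul]
  linear_combination Real.sin θ * Real.cos θ * hre
    - (Real.cos θ ^ 2 - Real.sin θ ^ 2) / 2 * him

lemma exists_unit_dotProduct_mulVec_neg (hA : A.IsSymm) (h : ¬ A.PosSemidef) :
    ∃ ν : Fin 2 → ℝ, ν 0 ^ 2 + ν 1 ^ 2 = 1 ∧ ν ⬝ᵥ A *ᵥ ν < 0 := by
  obtain ⟨x, hx⟩ := exists_dotProduct_mulVec_neg hA h
  have hx_pos : 0 < x 0 ^ 2 + x 1 ^ 2 := by
    by_contra! hx0
    have h₀ : x 0 = 0 := pow_eq_zero_iff two_ne_zero |>.1 (by nlinarith [sq_nonneg (x 1)])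
    have h₁ : x 1 = 0 := pow_eq_zero_iff two_ne_zero |>.1 (by nlinarith [sq_nonneg (x 0)])
    simp [h₀, h₁] at hx
  set r := √(x 0 ^ 2 + x 1 ^ 2)
  have hr : r ^ 2 = x 0 ^ 2 + x 1 ^ 2 := Real.sq_sqrt hx_pos.le
  have hr_pos : 0 < r := Real.sqrt_pos.2 hx_pos
  refine ⟨r⁻¹ • x, ?_, ?_⟩
  · simp only [Pi.smul_apply, smul_eq_mul, mul_pow, ← mul_add, ← hr]
    field_simp
  · rw [mulVec_smul, dotProduct_smul, smul_dotProduct, smul_smul, smul_eq_mul]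
    exact mul_neg_of_pos_of_neg (by positivity) hx

def convexifiedDetValues (A : Matrix (Fin 2) (Fin 2) ℝ) : Set ℝ :=
  {t | ∃ ν : Fin 2 → ℝ, ν 0 ^ 2 + ν 1 ^ 2 = 1 ∧
    t = convexifiedProduct (ν ⬝ᵥ A *ᵥ ν) (perp ν ⬝ᵥ A *ᵥ perp ν)}

lemma bddBelow_convexifiedDetValues (hA : A.IsSymm) : BddBelow (convexifiedDetValues A) := by
  refine ⟨-2 * (|A 0 0| + |A 0 1| + |A 1 1|), ?_⟩
  rintro _ ⟨ν, hν, rfl⟩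
  have hperp : perp ν 0 ^ 2 + perp ν 1 ^ 2 = 1 := by simpa [perp, add_comm] using hν
  have h₁ := neg_le_dotProduct_mulVec hA hν
  have h₂ := neg_le_dotProduct_mulVec hA hperp
  have hK : 0 ≤ |A 0 0| + |A 0 1| + |A 1 1| := by positivity
  calc -2 * (|A 0 0| + |A 0 1| + |A 1 1|)
      ≤ min (ν ⬝ᵥ A *ᵥ ν) 0 + min (perp ν ⬝ᵥ A *ᵥ perp ν) 0 := by
        have := le_min h₁ (neg_nonpos.2 hK)
        have := le_min h₂ (neg_nonpos.2 hK)
        linarith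
    _ ≤ _ := min_add_min_le_convexifiedProduct _ _

lemma convexifiedProduct_eq_det_add_sq (hA : A.IsSymm) (hpsd : A.PosSemidef) {ν : Fin 2 → ℝ}
    (hν : ν 0 ^ 2 + ν 1 ^ 2 = 1) :
    convexifiedProduct (ν ⬝ᵥ A *ᵥ ν) (perp ν ⬝ᵥ A *ᵥ perp ν) = A.det + (perp ν ⬝ᵥ A *ᵥ ν) ^ 2 := by
  rw [convexifiedProduct_of_nonneg (by simpa using hpsd.dotProduct_mulVec_nonneg ν)
    (by simpa using hpsd.dotProduct_mulVec_nonneg (perp ν)), dotProduct_mulVec_mul_perp hA hν]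

lemma det_le_of_mem_convexifiedDetValues (hA : A.IsSymm) (hpsd : A.PosSemidef) {t : ℝ}
    (ht : t ∈ convexifiedDetValues A) : A.det ≤ t := by
  obtain ⟨ν, hν, rfl⟩ := ht
  rw [convexifiedProduct_eq_det_add_sq hA hpsd hν]
  exact le_add_of_nonneg_right (sq_nonneg _)

lemma det_mem_convexifiedDetValues (hA : A.IsSymm) (hpsd : A.PosSemidef) :
    A.det ∈ convexifiedDetValues A := by
  obtain ⟨ν, hν, hoff⟩ := exists_perp_dotProduct_mulVec_eq_zero hA
  refine ⟨ν, hν, ?_⟩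
  rw [convexifiedProduct_eq_det_add_sq hA hpsd hν, hoff]
  ring

lemma exists_neg_mem_convexifiedDetValues (hA : A.IsSymm) (h : ¬ A.PosSemidef) :
    ∃ t ∈ convexifiedDetValues A, t < 0 := by
  obtain ⟨ν, hν, hneg⟩ := exists_unit_dotProduct_mulVec_neg hA h
  exact ⟨_, ⟨ν, hν, rfl⟩, convexifiedProduct_neg_of_neg_left hneg _⟩

end TwoByTwo

/-- for a 2×2 real symmetric matrix A, the convexified Monge–Ampère
operator min over orthonormal frames (ν, ν⊥) of (νᵀAν)⁺(ν⊥ᵀAν⊥)⁺ − (νᵀAν)⁻ − (ν⊥ᵀAν⊥)⁻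
equals det A when A is positive semidefinite, and is strictly negative otherwise. -/
theorem stmt19 (A : Matrix (Fin 2) (Fin 2) ℝ) (hA : A.IsSymm)
    (Q : (Fin 2 → ℝ) → ℝ) (hQ : ∀ ν, Q ν = ν ⬝ᵥ A.mulVec ν)
    (pp : (Fin 2 → ℝ) → (Fin 2 → ℝ)) (hpp : ∀ ν, pp ν = ![-(ν 1), ν 0])
    (Op : ℝ)
    (hOp : Op = sInf {t | ∃ ν : Fin 2 → ℝ, (ν 0) ^ 2 + (ν 1) ^ 2 = 1 ∧
      t = max (Q ν) 0 * max (Q (pp ν)) 0 - max (-(Q ν)) 0 - max (-(Q (pp ν))) 0}) :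
    (A.PosSemidef → Op = A.det) ∧ (¬ A.PosSemidef → Op < 0) := by
  obtain rfl : Q = fun ν => ν ⬝ᵥ A *ᵥ ν := funext hQ
  obtain rfl : pp = perp := funext hpp
  replace hOp : Op = sInf (convexifiedDetValues A) := hOp
  subst hOp
  refine ⟨fun hpsd => ?_, fun h => ?_⟩
  · exact IsLeast.csInf_eq ⟨det_mem_convexifiedDetValues hA hpsd,
      fun _ => det_le_of_mem_convexifiedDetValues hA hpsd⟩
  · obtain ⟨t, ht, hneg⟩ := exists_neg_mem_convexifiedDetValues hA h
    exact (csInf_le (bddBelow_convexifiedDetValues hA) ht).trans_lt hneg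
end
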